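/- arXiv:2004.00348 — 2 statements merged into one kernel-verified Lean document; each statement's English description precedes it below -/
import Mathlib

section
/- (Relaxation theorem.) For every logical constraint E over V identifiers and T types and every typing environment Γ, the continuous semantics evaluated at the binary matrix B(Γ) equals 1 if and only if Γ satisfies E, i.e., ⟦E⟧_{B(Γ)} = 1 ↔ Γ ⊨ E. -/
inductive Formula (V T : ℕ) : Type
  | atom : Fin V → Fin T → Formula V T
  | not  : Formula V T → Formula V T
  | and  : Formula V T → Formula V T → Formula V T
  | or   : Formula V T → Formula V T → Formula V T

/-- Continuous semantics of a logical constraint w.r.t. a real V × T matrix. -/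
def sem {V T : ℕ} (P : Matrix (Fin V) (Fin T) ℝ) : Formula V T → ℝ
  | .atom v τ  => P v τ
  | .not E     => 1 - sem P E
  | .and E₁ E₂ => sem P E₁ * sem P E₂
  | .or E₁ E₂  => sem P E₁ + sem P E₂ - sem P E₁ * sem P E₂

/-- Logical satisfaction relation for a typing environment. -/
def sat {V T : ℕ} (Γ : Fin V → Fin T) : Formula V T → Prop
  | .atom v τ  => Γ v = τ
  | .not E     => ¬ sat Γ E
  | .and E₁ E₂ => sat Γ E₁ ∧ sat Γ E₂
  | .or E₁ E₂  => sat Γ E₁ ∨ sat Γ E₂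

/-- Binary matrix of a typing environment. -/
def B {V T : ℕ} (Γ : Fin V → Fin T) : Matrix (Fin V) (Fin T) ℝ :=
  fun v τ => if Γ v = τ then 1 else 0

/-!
On {0, 1}-valued inputs the three arithmetic connectives `1 - x`, `x * y` and `x + y - x * y`
compute negation, conjunction and disjunction of indicators, so `⟦E⟧_{B Γ}` is the indicator
of `Γ ⊨ E`.
-/

section Indicator

variable {R : Type*} [Ring R] (p q : Prop) [Decidable p] [Decidable q]

theorem one_sub_ite_one_zero : 1 - (if p then 1 else 0 : R) = if ¬p then 1 else 0 := by
  by_cases hp : p <;> simp [hp]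

theorem ite_one_zero_mul_ite_one_zero :
    (if p then 1 else 0 : R) * (if q then 1 else 0) = if p ∧ q then 1 else 0 := by
  by_cases hp : p <;> simp [hp]

theorem ite_one_zero_add_sub_mul_ite_one_zero :
    (if p then 1 else 0 : R) + (if q then 1 else 0) - (if p then 1 else 0) * (if q then 1 else 0) =
      if p ∨ q then 1 else 0 := by
  by_cases hp : p <;> by_cases hq : q <;> simp [hp, hq]

end Indicator

open Classical in
theorem sem_B_eq_ite {V T : ℕ} (Γ : Fin V → Fin T) (E : Formula V T) :
    sem (B Γ) E = if sat Γ E then 1 else 0 := by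
  induction E with
  | atom v τ => rw [sem, sat, B]; congr
  | not E ih => rw [sem, sat, ih]; convert one_sub_ite_one_zero _
  | and E₁ E₂ ih₁ ih₂ => rw [sem, sat, ih₁, ih₂]; convert ite_one_zero_mul_ite_one_zero _ _
  | or E₁ E₂ ih₁ ih₂ =>
      rw [sem, sat, ih₁, ih₂]; convert ite_one_zero_add_sub_mul_ite_one_zero _ _

theorem relaxation {V T : ℕ} (E : Formula V T) (Γ : Fin V → Fin T) :
    sem (B Γ) E = 1 ↔ sat Γ E := by
  classical
  rw [sem_B_eq_ite]
  split_ifs with h <;> simp [h]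
end

section
/- (Log-space semantics agrees with the logarithm of the probability semantics.) Let P be a real V × T matrix all of whose entries lie in the open interval (0, 1), and let L be the V × T matrix with L_{v,τ} = log P_{v,τ}. Then for every logical constraint E over V identifiers and T types, the log-space semantics satisfies ⟦E⟧_L^{log} = log ⟦E⟧_P. -/
/-- Log-space semantics of a logical constraint w.r.t. a real V × T matrix. -/
noncomputable def logSem {V T : ℕ} (L : Matrix (Fin V) (Fin T) ℝ) : Formula V T → ℝ
  | .atom v τ  => L v τ
  | .not E     => Real.log (1 - Real.exp (logSem L E))
  | .and E₁ E₂ => logSem L E₁ + logSem L E₂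
  | .or E₁ E₂  => Real.log (Real.exp (logSem L E₁) + Real.exp (logSem L E₂)
                    - Real.exp (logSem L E₁ + logSem L E₂))

lemma sem_mem_Ioo {V T : ℕ} (P : Matrix (Fin V) (Fin T) ℝ)
    (hP : ∀ v τ, P v τ ∈ Set.Ioo (0 : ℝ) 1) (E : Formula V T) :
    sem P E ∈ Set.Ioo (0 : ℝ) 1 := by
  induction E with
  | atom v τ => exact hP v τ
  | not E ih =>
    obtain ⟨h1, h2⟩ := ih
    exact ⟨by simp [sem]; linarith, by simp [sem]; linarith⟩
  | and E₁ E₂ ih₁ ih₂ =>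
    obtain ⟨a1, a2⟩ := ih₁; obtain ⟨b1, b2⟩ := ih₂
    constructor
    · exact mul_pos a1 b1
    · calc sem P E₁ * sem P E₂ < 1 * 1 := by
            apply mul_lt_mul' a2.le b2 b1.le one_pos
        _ = 1 := by ring
  | or E₁ E₂ ih₁ ih₂ =>
    obtain ⟨a1, a2⟩ := ih₁; obtain ⟨b1, b2⟩ := ih₂
    constructor
    · simp only [sem]; nlinarith
    · simp only [sem]; nlinarith

theorem logSem_eq_log_sem {V T : ℕ} (P : Matrix (Fin V) (Fin T) ℝ)
    (hP : ∀ v τ, P v τ ∈ Set.Ioo (0 : ℝ) 1)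
    (L : Matrix (Fin V) (Fin T) ℝ) (hL : ∀ v τ, L v τ = Real.log (P v τ))
    (E : Formula V T) :
    logSem L E = Real.log (sem P E) := by
  induction E with
  | atom v τ => simp [logSem, sem, hL]
  | not E ih =>
    have h := sem_mem_Ioo P hP E
    simp only [logSem, sem, ih, Real.exp_log h.1]
  | and E₁ E₂ ih₁ ih₂ =>
    have h₁ := sem_mem_Ioo P hP E₁
    have h₂ := sem_mem_Ioo P hP E₂
    simp only [logSem, sem, ih₁, ih₂]
    rw [← Real.log_mul (ne_of_gt h₁.1) (ne_of_gt h₂.1)]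
  | or E₁ E₂ ih₁ ih₂ =>
    have h₁ := sem_mem_Ioo P hP E₁
    have h₂ := sem_mem_Ioo P hP E₂
    simp only [logSem, sem, ih₁, ih₂, Real.exp_add, Real.exp_log h₁.1,
      Real.exp_log h₂.1]
end
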